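/- Fix τ ∈ ℝ and ω ∈ U, and let λ = λ(ω), the vectors v₋⁺, v₊⁺, v₊⁻ and the coefficients C, D be as in the context. Define η₋ : ℝ → ℂ² by η₋(x) = e^(λx)·v₋⁺ for x ≤ 0 and η₋(x) = C·e^(λx)·v₊⁺ + D·e^(-λx)·v₊⁻ for x > 0. Then η₋ is continuous on ℝ, differentiable at every x ≠ 0, satisfies the dislocated Dirac eigenvalue equation at parameter τ with spectral parameter ω at every x ≠ 0 (i.e. i·σ₃·η₋'(x) + σ₁·η₋(x) = ω·η₋(x) for x < 0 and i·σ₃·η₋'(x) + σ⋆(τ)·η₋(x) = ω·η₋(x) for x > 0), and η₋(x) → 0 as x → -∞. -/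

import Mathlib

open Complex Filter Matrix

/-- `U = ℂ \ ((-∞,-1] ∪ [1,∞))`. -/
def U : Set ℂ := {ω : ℂ | ω.im ≠ 0 ∨ (-1 < ω.re ∧ ω.re < 1)}

/-- `λ(ω) = (1-ω²)^(1/2)`, principal branch of the complex square root. -/
noncomputable def lam (ω : ℂ) : ℂ := (1 - ω ^ 2) ^ ((1 : ℂ) / 2)

/-- Pauli matrix σ₁. -/
def σ1 : Matrix (Fin 2) (Fin 2) ℂ := !![0, 1; 1, 0]

/-- Pauli matrix σ₃. -/
def σ3 : Matrix (Fin 2) (Fin 2) ℂ := !![1, 0; 0, -1]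

/-- σ⋆(τ) = [[0, e^(-iτ)],[e^(iτ), 0]]. -/
noncomputable def σstar (τ : ℝ) : Matrix (Fin 2) (Fin 2) ℂ :=
  !![0, Complex.exp (-(Complex.I * τ)); Complex.exp (Complex.I * τ), 0]

/-- The decaying solution η₋: equal to `e^(λx)·v₋⁺` for `x ≤ 0` and to
`C·e^(λx)·v₊⁺ + D·e^(-λx)·v₊⁻` for `x > 0`. -/
noncomputable def ηminus (τ : ℝ) (ω : ℂ) (x : ℝ) : Fin 2 → ℂ :=
  if x ≤ 0 then
    Complex.exp (lam ω * x) • ![1, ω - Complex.I * lam ω]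
  else
    ((ω * (Complex.exp (Complex.I * τ) - 1)
          + Complex.I * lam ω * (Complex.exp (Complex.I * τ) + 1)) / (2 * Complex.I * lam ω)
        * Complex.exp (lam ω * x)) • ![Complex.exp (-(Complex.I * τ)), ω - Complex.I * lam ω]
    + ((1 - Complex.exp (Complex.I * τ)) * (ω - Complex.I * lam ω) / (2 * Complex.I * lam ω)
        * Complex.exp (-(lam ω) * x)) • ![Complex.exp (-(Complex.I * τ)), ω + Complex.I * lam ω]

/-!
On each half-line `η₋` is a combination of exponential modes `e^(μx)·v` with `μ = ±λ`, and such a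
mode solves `i·σ₃·w' + M·w = ω·w` exactly when `i·μ·σ₃·v + M·v = ω·v`; for
`M = σ⋆(τ)` and `v = (e^(-iτ), ω - iμ)` this reduces to `μ² = 1 - ω²`, and `σ₁ = σ⋆(0)`.
The coefficients `C`, `D` are the solution of `C·v₊⁺ + D·v₊⁻ = v₋⁺`, which makes the two branches
agree at `0`, and `Re λ > 0` gives the decay at `-∞`.
-/

open Topology

lemma re_cpow_inv_two_pos {z : ℂ} (hz : z ∈ slitPlane) : 0 < (z ^ (2⁻¹ : ℂ)).re := by
  rw [cpow_inv_two_re, Real.sqrt_pos]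
  rcases hz with hre | him
  · linarith [norm_nonneg z]
  · linarith [abs_re_lt_norm.2 him, neg_abs_le z.re]

lemma one_sub_sq_mem_slitPlane {ω : ℂ} (hω : ω ∈ U) : 1 - ω ^ 2 ∈ slitPlane := by
  rw [mem_slitPlane_iff, or_iff_not_imp_right, not_not]
  intro him
  simp only [sub_re, one_re, sub_im, one_im, pow_two, mul_re, mul_im] at him ⊢
  rcases hω with hω | hω
  · have : ω.re = 0 := by
      rcases mul_eq_zero.1 (by linarith : ω.re * ω.im = 0) with h | h
      exacts [h, absurd h hω]
    nlinarith [sq_nonneg ω.im]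
  · nlinarith [sq_nonneg ω.im]

lemma lam_sq (ω : ℂ) : lam ω ^ 2 = 1 - ω ^ 2 := by
  simp [lam]

lemma lam_re_pos {ω : ℂ} (hω : ω ∈ U) : 0 < (lam ω).re := by
  rw [lam, one_div]
  exact re_cpow_inv_two_pos (one_sub_sq_mem_slitPlane hω)

lemma lam_ne_zero {ω : ℂ} (hω : ω ∈ U) : lam ω ≠ 0 := fun h => (lam_re_pos hω).ne' (by simp [h])

lemma σstar_zero : σstar 0 = σ1 := by
  ext i j
  fin_cases i <;> fin_cases j <;> simp [σstar, σ1]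

/-- The Dirac equation `i·σ₃·w' + M·w = ω·w` at a point where `w = u` and `w' = u'`. -/
def DiracEq (M : Matrix (Fin 2) (Fin 2) ℂ) (ω : ℂ) (u u' : Fin 2 → ℂ) : Prop :=
  I • σ3.mulVec u' + M.mulVec u = ω • u

namespace DiracEq

variable {M : Matrix (Fin 2) (Fin 2) ℂ} {ω : ℂ} {u u' w w' : Fin 2 → ℂ}

lemma smul (h : DiracEq M ω u u') (c : ℂ) : DiracEq M ω (c • u) (c • u') := by
  rw [DiracEq, mulVec_smul, mulVec_smul, smul_comm I c, smul_comm ω c, ← smul_add, h]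

lemma add (hu : DiracEq M ω u u') (hw : DiracEq M ω w w') : DiracEq M ω (u + w) (u' + w') := by
  rw [DiracEq, mulVec_add, mulVec_add, smul_add, smul_add, add_add_add_comm, hu, hw]

end DiracEq

lemma diracEq_σstar_mode (τ : ℝ) {ω μ : ℂ} (hμ : μ ^ 2 = 1 - ω ^ 2) :
    DiracEq (σstar τ) ω ![exp (-(I * τ)), ω - I * μ] (μ • ![exp (-(I * τ)), ω - I * μ]) := by
  have hexp : exp (I * τ) * exp (-(I * τ)) = 1 := by rw [← exp_add, add_neg_cancel, exp_zero]
  funext i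
  fin_cases i <;>
    simp only [σstar, σ3, smul_cons, smul_eq_mul, smul_empty, mulVec_cons, mulVec_empty, smul_add,
      Pi.add_apply, Pi.smul_apply, Function.comp_apply, cons_val_zero, cons_val_one,
      cons_val_fin_one, head_cons, tail_cons, Fin.isValue, Fin.zero_eta, Fin.mk_one, mul_one,
      mul_zero, mul_neg, add_zero, zero_add]
  · ring
  · linear_combination μ ^ 2 * I_sq - hμ + hexp

def SolvesDiracAt (M : Matrix (Fin 2) (Fin 2) ℂ) (ω : ℂ) (w : ℝ → Fin 2 → ℂ) (x : ℝ) : Prop :=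
  ∃ w', HasDerivAt w w' x ∧ DiracEq M ω (w x) w'

namespace SolvesDiracAt

variable {M : Matrix (Fin 2) (Fin 2) ℂ} {ω : ℂ} {v w : ℝ → Fin 2 → ℂ} {x : ℝ}

lemma differentiableAt (h : SolvesDiracAt M ω w x) : DifferentiableAt ℝ w x :=
  let ⟨_, hd, _⟩ := h; hd.differentiableAt

lemma diracEq_deriv (h : SolvesDiracAt M ω w x) : DiracEq M ω (w x) (deriv w x) :=
  let ⟨_, hd, he⟩ := h; hd.deriv ▸ he

lemma congr_of_eventuallyEq (h : SolvesDiracAt M ω w x) (hvw : v =ᶠ[𝓝 x] w) :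
    SolvesDiracAt M ω v x :=
  let ⟨w', hd, he⟩ := h; ⟨w', hd.congr_of_eventuallyEq hvw, hvw.eq_of_nhds ▸ he⟩

end SolvesDiracAt

lemma hasDerivAt_mul_exp_smul {E : Type*} [NormedAddCommGroup E] [NormedSpace ℂ E]
    (c μ : ℂ) (v : E) (x : ℝ) :
    HasDerivAt (fun y : ℝ => (c * exp (μ * y)) • v) ((c * exp (μ * x)) • μ • v) x := by
  have h := ((((hasDerivAt_id x).ofReal_comp.const_mul μ).cexp).const_mul c).smul_const v
  simpa [smul_smul, mul_comm, mul_left_comm] using h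

lemma DiracEq.solvesDiracAt_mul_exp_smul {M : Matrix (Fin 2) (Fin 2) ℂ} {ω μ : ℂ} {v : Fin 2 → ℂ}
    (hv : DiracEq M ω v (μ • v)) (c : ℂ) (x : ℝ) :
    SolvesDiracAt M ω (fun y : ℝ => (c * exp (μ * y)) • v) x :=
  ⟨_, hasDerivAt_mul_exp_smul c μ v x, hv.smul _⟩

noncomputable def coeffC (τ : ℝ) (ω : ℂ) : ℂ :=
  (ω * (exp (I * τ) - 1) + I * lam ω * (exp (I * τ) + 1)) / (2 * I * lam ω)

noncomputable def coeffD (τ : ℝ) (ω : ℂ) : ℂ := (1 - exp (I * τ)) * (ω - I * lam ω) / (2 * I * lam ω)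

noncomputable def ηLeft (ω : ℂ) (x : ℝ) : Fin 2 → ℂ := exp (lam ω * x) • ![1, ω - I * lam ω]

noncomputable def ηRight (τ : ℝ) (ω : ℂ) (x : ℝ) : Fin 2 → ℂ :=
  (coeffC τ ω * exp (lam ω * x)) • ![exp (-(I * τ)), ω - I * lam ω]
    + (coeffD τ ω * exp (-(lam ω) * x)) • ![exp (-(I * τ)), ω + I * lam ω]

lemma solvesDiracAt_ηLeft (ω : ℂ) (x : ℝ) : SolvesDiracAt σ1 ω (ηLeft ω) x := by
  have hmode := diracEq_σstar_mode 0 (lam_sq ω)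
  simp only [σstar_zero, ofReal_zero, mul_zero, neg_zero, exp_zero] at hmode
  have h := hmode.solvesDiracAt_mul_exp_smul 1 x
  simp only [one_mul] at h
  exact h

lemma solvesDiracAt_ηRight (τ : ℝ) (ω : ℂ) (x : ℝ) : SolvesDiracAt (σstar τ) ω (ηRight τ ω) x := by
  have hplus := diracEq_σstar_mode τ (lam_sq ω)
  have hminus := diracEq_σstar_mode τ (ω := ω) (μ := -lam ω) (by rw [neg_sq, lam_sq])
  rw [mul_neg, sub_neg_eq_add] at hminus
  obtain ⟨_, hd₁, he₁⟩ := hplus.solvesDiracAt_mul_exp_smul (coeffC τ ω) x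
  obtain ⟨_, hd₂, he₂⟩ := hminus.solvesDiracAt_mul_exp_smul (coeffD τ ω) x
  exact ⟨_, hd₁.add hd₂, he₁.add he₂⟩

lemma ηRight_zero {τ : ℝ} {ω : ℂ} (hω : ω ∈ U) : ηRight τ ω 0 = ηLeft ω 0 := by
  have hl := lam_ne_zero hω
  have hexp : exp (I * τ) * exp (-(I * τ)) = 1 := by rw [← exp_add, add_neg_cancel, exp_zero]
  funext i
  fin_cases i <;>
    simp only [ηRight, ηLeft, coeffC, coeffD, ofReal_zero, mul_zero, exp_zero, mul_one, one_mul,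
      smul_cons, smul_eq_mul, smul_empty, Pi.add_apply, Pi.smul_apply, cons_val_zero,
      cons_val_one, cons_val_fin_one, Fin.isValue, Fin.zero_eta, Fin.mk_one] <;>
    field_simp
  · linear_combination 2 * I * lam ω * hexp
  · ring

lemma ηminus_eventuallyEq_ηLeft (τ : ℝ) (ω : ℂ) {x : ℝ} (hx : x < 0) :
    ηminus τ ω =ᶠ[𝓝 x] ηLeft ω :=
  (eventually_lt_nhds hx).mono fun _ hy => if_pos hy.le

lemma ηminus_eventuallyEq_ηRight (τ : ℝ) (ω : ℂ) {x : ℝ} (hx : 0 < x) :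
    ηminus τ ω =ᶠ[𝓝 x] ηRight τ ω :=
  (eventually_gt_nhds hx).mono fun _ hy => if_neg hy.not_ge

lemma continuous_ηminus {τ : ℝ} {ω : ℂ} (hω : ω ∈ U) : Continuous (ηminus τ ω) := by
  have hL : Continuous (ηLeft ω) := continuous_iff_continuousAt.2 fun x =>
    (solvesDiracAt_ηLeft ω x).differentiableAt.continuousAt
  have hR : Continuous (ηRight τ ω) := continuous_iff_continuousAt.2 fun x =>
    (solvesDiracAt_ηRight τ ω x).differentiableAt.continuousAt
  exact hL.if_le hR continuous_id continuous_const fun x hx => hx ▸ (ηRight_zero hω).symm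

lemma tendsto_ηLeft_atBot {ω : ℂ} (hω : 0 < (lam ω).re) :
    Tendsto (ηLeft ω) atBot (𝓝 0) := by
  have hre : Tendsto (fun x : ℝ => (lam ω * x).re) atBot atBot := by
    simpa [mul_comm] using tendsto_id.const_mul_atBot hω
  have h := (tendsto_exp_comap_re_atBot.comp (tendsto_comap_iff.2 hre)).smul_const
    ![1, ω - I * lam ω]
  rwa [zero_smul] at h

theorem stmt3 (τ : ℝ) (ω : ℂ) (hω : ω ∈ U) :
    Continuous (ηminus τ ω) ∧
    (∀ x : ℝ, x ≠ 0 → DifferentiableAt ℝ (ηminus τ ω) x) ∧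
    (∀ x : ℝ, x < 0 →
      Complex.I • σ3.mulVec (deriv (ηminus τ ω) x) + σ1.mulVec (ηminus τ ω x)
        = ω • ηminus τ ω x) ∧
    (∀ x : ℝ, 0 < x →
      Complex.I • σ3.mulVec (deriv (ηminus τ ω) x) + (σstar τ).mulVec (ηminus τ ω x)
        = ω • ηminus τ ω x) ∧
    Tendsto (ηminus τ ω) atBot (nhds 0) := by
  have hneg : ∀ x < 0, SolvesDiracAt σ1 ω (ηminus τ ω) x := fun x hx =>
    (solvesDiracAt_ηLeft ω x).congr_of_eventuallyEq (ηminus_eventuallyEq_ηLeft τ ω hx)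
  have hpos : ∀ x > 0, SolvesDiracAt (σstar τ) ω (ηminus τ ω) x := fun x hx =>
    (solvesDiracAt_ηRight τ ω x).congr_of_eventuallyEq (ηminus_eventuallyEq_ηRight τ ω hx)
  refine ⟨continuous_ηminus hω, fun x hx => ?_, fun x hx => (hneg x hx).diracEq_deriv,
    fun x hx => (hpos x hx).diracEq_deriv, ?_⟩
  · rcases hx.lt_or_gt with hx | hx
    exacts [(hneg x hx).differentiableAt, (hpos x hx).differentiableAt]
  · refine (tendsto_ηLeft_atBot (lam_re_pos hω)).congr' ?_
    filter_upwards [eventually_le_atBot 0] with x hx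
    exact (if_pos hx).symm
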